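/- Let G be a group, H a complex Hilbert space, φ a state on B(H), and π : G → U(H) a φ-near representation (i.e., φ is π(G)-invariant and φ((π(gh) − π(g)π(h))*(π(gh) − π(g)π(h))) = 0 for all g, h). Then φ ∘ π is a character on G: it maps e to 1, is of positive type, and is conjugation-invariant (φ(π(h⁻¹gh)) = φ(π(g)) for all g, h). -/

import Mathlib

/-- A state on `B(H)`: a positive unital linear functional. -/
def IsState {H : Type*} [NormedAddCommGroup H] [InnerProductSpace ℂ H] [CompleteSpace H]
    (φ : (H →L[ℂ] H) →ₗ[ℂ] ℂ) : Prop :=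
  φ 1 = 1 ∧ ∀ a : H →L[ℂ] H, ∃ r : ℝ, 0 ≤ r ∧ φ (star a * a) = r

private lemma aux_zero (A b : ℂ) (h : ∀ s : ℝ, ∃ r : ℝ, 0 ≤ r ∧ A + s * b = r) : b = 0 := by
  obtain ⟨r0, hr0, h0⟩ := h 0
  simp only [Complex.ofReal_zero, zero_mul, add_zero] at h0
  obtain ⟨r1, hr1, h1⟩ := h 1
  have hb : b = ((r1 - r0 : ℝ) : ℂ) := by
    push_cast at h1 ⊢
    linear_combination h1 - h0
  by_contra hb0
  have ht : (r1 - r0 : ℝ) ≠ 0 := by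
    intro h'
    exact hb0 (by rw [hb, h', Complex.ofReal_zero])
  obtain ⟨r, hr, h2⟩ := h (-(r0 + 1) / (r1 - r0))
  rw [hb, h0] at h2
  have hR : r0 + (-(r0 + 1) / (r1 - r0)) * (r1 - r0) = -1 := by field_simp; ring
  have h2' : ((r0 + (-(r0 + 1) / (r1 - r0)) * (r1 - r0) : ℝ) : ℂ) = r := by
    push_cast at h2 ⊢; exact h2
  rw [hR] at h2'
  have : (-1 : ℝ) = r := by exact_mod_cast h2'
  linarith

private lemma state_orth {H : Type*} [NormedAddCommGroup H] [InnerProductSpace ℂ H]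
    [CompleteSpace H] (φ : (H →L[ℂ] H) →ₗ[ℂ] ℂ) (hφ : IsState φ) {d : H →L[ℂ] H}
    (hd : φ (star d * d) = 0) (a : H →L[ℂ] H) :
    φ (star a * d) = 0 ∧ φ (star d * a) = 0 := by
  have key : ∀ t : ℂ,
      ∃ r : ℝ, 0 ≤ r ∧
        φ (star a * a) + t * φ (star a * d) + (starRingEnd ℂ) t * φ (star d * a) = r := by
    intro t
    obtain ⟨r, hr, heq⟩ := hφ.2 (a + t • d)
    refine ⟨r, hr, ?_⟩
    rw [← heq]
    have hexp : star (a + t • d) * (a + t • d)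
        = star a * a + t • (star a * d) + (starRingEnd ℂ) t • (star d * a)
          + (t * (starRingEnd ℂ) t) • (star d * d) := by
      rw [star_add, star_smul]
      simp only [add_mul, mul_add, smul_add, smul_mul_assoc, mul_smul_comm, smul_smul,
        Complex.star_def]
      abel
    rw [hexp]
    simp only [map_add, map_smul, hd, smul_eq_mul, smul_zero, mul_zero, add_zero]
  set c := φ (star a * d) with hc
  set c' := φ (star d * a) with hc'
  have h1 : c + c' = 0 := by
    apply aux_zero (φ (star a * a))
    intro s
    obtain ⟨r, hr, h⟩ := key (s : ℂ)
    refine ⟨r, hr, ?_⟩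
    rw [← h, Complex.conj_ofReal]
    ring
  have h2 : Complex.I * (c - c') = 0 := by
    apply aux_zero (φ (star a * a))
    intro s
    obtain ⟨r, hr, h⟩ := key ((s : ℂ) * Complex.I)
    refine ⟨r, hr, ?_⟩
    have hconj : (starRingEnd ℂ) ((s : ℂ) * Complex.I) = (s : ℂ) * (-Complex.I) := by
      simp [Complex.conj_ofReal, Complex.conj_I]
    rw [← h, hconj]
    ring
  have h3 : c - c' = 0 := by
    rcases mul_eq_zero.mp h2 with h | h
    · exact absurd h Complex.I_ne_zero
    · exact h
  constructor
  · rw [hc]; linear_combination (h1 + h3) / 2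
  · rw [hc']; linear_combination (h1 - h3) / 2

theorem near_representation_gives_character
    {G : Type*} [Group G]
    {H : Type*} [NormedAddCommGroup H] [InnerProductSpace ℂ H] [CompleteSpace H]
    (φ : (H →L[ℂ] H) →ₗ[ℂ] ℂ) (hφ : IsState φ)
    (π : G → (H →L[ℂ] H)) (hπ : ∀ g, π g ∈ unitary (H →L[ℂ] H))
    (hinv : ∀ (g : G) (a : H →L[ℂ] H), φ (star (π g) * a * π g) = φ a)
    (hnear : ∀ g h : G,
      φ (star (π (g * h) - π g * π h) * (π (g * h) - π g * π h)) = 0) :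
    φ (π 1) = 1 ∧
    (∀ (n : ℕ) (c : Fin n → ℂ) (g : Fin n → G),
      ∃ r : ℝ, 0 ≤ r ∧
        ∑ i, ∑ j, (starRingEnd ℂ) (c i) * c j * φ (π ((g i)⁻¹ * g j)) = r) ∧
    (∀ g h : G, φ (π (h⁻¹ * g * h)) = φ (π g)) := by
  have hstar : ∀ g : G, star (π g) * π g = 1 := fun g => (hπ g).1
  -- Key fact B: φ (π (g⁻¹ * h)) = φ (star (π g) * π h)
  have B : ∀ g h : G, φ (π (g⁻¹ * h)) = φ (star (π g) * π h) := by
    intro g h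
    have hn : φ (star (π h - π g * π (g⁻¹ * h)) * (π h - π g * π (g⁻¹ * h))) = 0 := by
      have := hnear g (g⁻¹ * h)
      rwa [mul_inv_cancel_left] at this
    have ho := (state_orth φ hφ hn (π g)).1
    rw [mul_sub, ← mul_assoc, hstar, one_mul, map_sub, sub_eq_zero] at ho
    exact ho.symm
  -- Key fact C: substitute π(g*h) by π g * π h on the right of anything
  have C : ∀ (a : H →L[ℂ] H) (g h : G), φ (a * π (g * h)) = φ (a * (π g * π h)) := by
    intro a g h
    have ho := (state_orth φ hφ (hnear g h) (star a)).1
    rw [star_star, mul_sub, map_sub, sub_eq_zero] at ho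
    exact ho
  -- φ (π 1) = 1
  have hone : φ (π 1) = 1 := by
    have hn : φ (star (π 1 - π 1 * π 1) * (π 1 - π 1 * π 1)) = 0 := by
      have := hnear 1 1
      rwa [one_mul] at this
    have ho := (state_orth φ hφ hn (π 1)).1
    rw [mul_sub, hstar, ← mul_assoc, hstar, one_mul, map_sub, sub_eq_zero] at ho
    rw [← ho, hφ.1]
  refine ⟨hone, ?_, ?_⟩
  · intro n c g
    obtain ⟨r, hr, heq⟩ := hφ.2 (∑ j, c j • π (g j))
    refine ⟨r, hr, ?_⟩
    rw [← heq]
    have hexp : star (∑ j, c j • π (g j)) * (∑ j, c j • π (g j))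
        = ∑ i, ∑ j, ((starRingEnd ℂ) (c i) * c j) • (star (π (g i)) * π (g j)) := by
      rw [star_sum, Finset.sum_mul]
      refine Finset.sum_congr rfl fun i _ => ?_
      rw [Finset.mul_sum]
      refine Finset.sum_congr rfl fun j _ => ?_
      rw [star_smul, smul_mul_assoc, mul_smul_comm, smul_smul, Complex.star_def]
    rw [hexp, map_sum]
    refine Finset.sum_congr rfl fun i _ => ?_
    rw [map_sum]
    refine Finset.sum_congr rfl fun j _ => ?_
    rw [map_smul, smul_eq_mul, B]
  · intro g h
    have e1 : h⁻¹ * g * h = h⁻¹ * (g * h) := by group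
    rw [e1, B, C, ← mul_assoc, hinv]
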